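/- arXiv:1706.08908 — 3 statements merged into one kernel-verified Lean document; each statement's English description precedes it below -/
import Mathlib

section
/- Trichotomy for ordinals: for all ZFC sets x and y that are ordinals, either x = y, or x ∈ y, or y ∈ x. -/
/-- A ZFC set is an ordinal (in the paper's sense) if it is membership transitive
and every member is membership transitive. -/
def ZFSet.IsOrdinal' (x : ZFSet) : Prop :=
  x.IsTransitive ∧ ∀ y ∈ x, ZFSet.IsTransitive y

theorem ZFSet.IsOrdinal'.mem {x y : ZFSet} (hx : x.IsOrdinal') (h : y ∈ x) :
    y.IsOrdinal' :=
  ⟨hx.2 y h, fun z hz => hx.2 z (hx.1 y h hz)⟩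

theorem ZFSet.isOrdinal'_trichotomy_aux :
    ∀ x : ZFSet, x.IsOrdinal' → ∀ y : ZFSet, y.IsOrdinal' →
      x = y ∨ x ∈ y ∨ y ∈ x := by
  intro x
  induction x using ZFSet.mem_wf.induction with
  | _ x IH1 =>
    intro hx y
    induction y using ZFSet.mem_wf.induction with
    | _ y IH2 =>
      intro hy
      by_contra hcon
      push_neg at hcon
      obtain ⟨hne, hnxy, hnyx⟩ := hcon
      apply hne
      apply ZFSet.ext
      intro z
      constructor
      · intro hz
        rcases IH1 z hz (hx.mem hz) y hy with h | h | h
        · exact absurd (h ▸ hz) hnyx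
        · exact h
        · exact absurd (hx.1 z hz h) hnyx
      · intro hz
        rcases IH2 z hz (hy.mem hz) with h | h | h
        · exact absurd (h ▸ hz) hnxy
        · exact absurd (hy.1 z hz h) hnxy
        · exact h

/-- Trichotomy for ordinals: any two ordinals are equal or one is a member of the other. -/
theorem ZFSet.isOrdinal'_trichotomy {x y : ZFSet}
    (hx : x.IsOrdinal') (hy : y.IsOrdinal') :
    x = y ∨ x ∈ y ∨ y ∈ x :=
  ZFSet.isOrdinal'_trichotomy_aux x hx y hy
end

section
/- If A is a nonempty ZFC set every member of which is an ordinal, then the intersection ⋂₀ A (the sInter of A) is an ordinal, and moreover ⋂₀ A ∈ A (so ⋂₀ A is the membership-least element of A). -/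
namespace ZFSet

theorem isOrdinal'_iff_isOrdinal {x : ZFSet} : x.IsOrdinal' ↔ x.IsOrdinal :=
  isOrdinal_iff_forall_mem_isTransitive.symm

theorem sInter_subset_of_mem {x y : ZFSet} (hy : y ∈ x) : ⋂₀ x ⊆ y :=
  fun _ hz => mem_of_mem_sInter hz hy

theorem IsTransitive.sInter {x : ZFSet} (h : ∀ y ∈ x, y.IsTransitive) :
    (⋂₀ x).IsTransitive := by
  rcases eq_empty_or_nonempty x with rfl | hx
  · simpa only [sInter_empty] using isTransitive_empty
  · intro z hz w hw
    rw [mem_sInter hx] at hz ⊢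
    exact fun y hy => (h y hy).mem_trans hw (hz y hy)

theorem IsOrdinal.sInter {x : ZFSet} (h : ∀ y ∈ x, y.IsOrdinal) : (⋂₀ x).IsOrdinal :=
  isOrdinal_iff_forall_mem_isOrdinal.2
    ⟨IsTransitive.sInter fun y hy => (h y hy).isTransitive, fun z hz => by
      rcases eq_empty_or_nonempty x with rfl | ⟨y, hy⟩
      · simp only [sInter_empty, notMem_empty] at hz
      · exact (h y hy).mem (mem_of_mem_sInter hz hy)⟩

theorem sInter_mem_of_isOrdinal {x : ZFSet} (hx : x.Nonempty) (h : ∀ y ∈ x, y.IsOrdinal) :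
    ⋂₀ x ∈ x := by
  by_contra hnot
  apply mem_irrefl (⋂₀ x)
  rw [mem_sInter hx]
  intro y hy
  have hsub := (IsOrdinal.sInter h).eq_or_mem_of_subset (h y hy) (sInter_subset_of_mem hy)
  exact hsub.resolve_left fun heq => hnot (heq ▸ hy)

end ZFSet

/-- The intersection of a nonempty ZFC set of ordinals is an ordinal and
is a member of the set (its membership-least element). -/
theorem ZFSet.isOrdinal'_sInter {A : ZFSet} (hne : A.Nonempty)
    (hA : ∀ y ∈ A, ZFSet.IsOrdinal' y) :
    (ZFSet.sInter A : ZFSet).IsOrdinal' ∧ (ZFSet.sInter A : ZFSet) ∈ A := by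
  have hA' : ∀ y ∈ A, y.IsOrdinal := fun y hy => isOrdinal'_iff_isOrdinal.1 (hA y hy)
  exact ⟨isOrdinal'_iff_isOrdinal.2 (IsOrdinal.sInter hA'), sInter_mem_of_isOrdinal hne hA'⟩
end

section
/- Every multiplicatively closed ordinal is closed under Hessenberg natural multiplication: if α is an ordinal such that β * γ < α for all β < α and γ < α, then for all β < α and γ < α the natural product satisfies β ⨳ γ < α. -/
universe u

namespace Ordinal

/-- Natural (Hessenberg) addition, as in Mathlib of December 2024. -/
noncomputable def nadd (a b : Ordinal.{u}) : Ordinal.{u} :=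
  max (⨆ x : Set.Iio a, Order.succ (nadd x.1 b)) (⨆ x : Set.Iio b, Order.succ (nadd a x.1))
termination_by (a, b)
decreasing_by all_goals cases x; decreasing_tactic

infixl:65 " ♯ " => Ordinal.nadd

/-- Natural (Hessenberg) multiplication, as in Mathlib of December 2024. -/
noncomputable def nmul (a b : Ordinal.{u}) : Ordinal.{u} :=
  sInf {c | ∀ a' < a, ∀ b' < b, nmul a' b ♯ nmul a b' < c ♯ nmul a' b'}
termination_by (a, b)

end Ordinal

infixl:70 " ⨳ " => Ordinal.nmul

/-!
The multiplicatively closed ordinals are those `≤ 2` and the `ω ^ ω ^ o`. Every power `ω ^ c` is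
closed under `♯`: if `b` is, splitting `x = b * i + r` and `y = b * j + s` with `r, s < b` bounds
`x ♯ y` by `b * (i + j) + (r ♯ s)`. Induction on `(p, q)` gives `ω ^ p ⨳ ω ^ q ≤ ω ^ (p ♯ q)`: an
ordinal below `ω ^ p` lies below some `ω ^ d * n` with `d < p`, and the finite factor `n` costs less
than one more power of `ω`. Hence `a ⨳ b < ω ^ (p ♯ q)` for `a < ω ^ p` and `b < ω ^ q`, and below
`ω ^ ω ^ o` with `o ≠ 0` the exponents can be taken below `ω ^ o`, which is closed under `♯`.
-/

namespace Ordinal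

theorem nadd_le_iff {a b c : Ordinal.{u}} :
    b ♯ c ≤ a ↔ (∀ b' < b, b' ♯ c < a) ∧ ∀ c' < c, b ♯ c' < a := by
  rw [nadd, max_le_iff, Ordinal.iSup_le_iff, Ordinal.iSup_le_iff]
  simp only [Order.succ_le_iff, Subtype.forall, Set.mem_Iio]

theorem lt_nadd_iff {a b c : Ordinal.{u}} :
    a < b ♯ c ↔ (∃ b' < b, a ≤ b' ♯ c) ∨ ∃ c' < c, a ≤ b ♯ c' := by
  rw [← not_le, nadd_le_iff]
  simp only [not_and_or, not_forall, not_lt, exists_prop]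

theorem nadd_lt_nadd_left {b c : Ordinal.{u}} (h : b < c) (a : Ordinal.{u}) : a ♯ b < a ♯ c :=
  (nadd_le_iff.1 le_rfl).2 b h

theorem nadd_lt_nadd_right {b c : Ordinal.{u}} (h : b < c) (a : Ordinal.{u}) : b ♯ a < c ♯ a :=
  (nadd_le_iff.1 le_rfl).1 b h

theorem nadd_le_nadd_left {b c : Ordinal.{u}} (h : b ≤ c) (a : Ordinal.{u}) : a ♯ b ≤ a ♯ c := by
  rcases h.lt_or_eq with h | rfl
  exacts [(nadd_lt_nadd_left h a).le, le_rfl]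

theorem nadd_le_nadd_right {b c : Ordinal.{u}} (h : b ≤ c) (a : Ordinal.{u}) : b ♯ a ≤ c ♯ a := by
  rcases h.lt_or_eq with h | rfl
  exacts [(nadd_lt_nadd_right h a).le, le_rfl]

theorem nadd_le_nadd {a b c d : Ordinal.{u}} (h₁ : a ≤ b) (h₂ : c ≤ d) : a ♯ c ≤ b ♯ d :=
  (nadd_le_nadd_left h₂ a).trans (nadd_le_nadd_right h₁ d)

theorem nadd_lt_nadd_of_lt_of_le {a b c d : Ordinal.{u}} (h₁ : a < b) (h₂ : c ≤ d) :
    a ♯ c < b ♯ d :=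
  (nadd_le_nadd_left h₂ a).trans_lt (nadd_lt_nadd_right h₁ d)

theorem le_self_nadd {a b : Ordinal.{u}} : a ≤ a ♯ b := by
  induction a using WellFoundedLT.induction with
  | _ a IH =>
    by_contra! h
    exact (IH _ h).not_gt (nadd_lt_nadd_right h b)

private theorem nadd_comm_le (a b : Ordinal.{u}) : a ♯ b ≤ b ♯ a := by
  rw [nadd_le_iff]
  refine ⟨fun a' ha => ?_, fun b' hb => ?_⟩
  · exact (nadd_comm_le a' b).trans_lt (nadd_lt_nadd_left ha b)
  · exact (nadd_comm_le a b').trans_lt (nadd_lt_nadd_right hb a)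
termination_by (a, b)

theorem nadd_comm (a b : Ordinal.{u}) : a ♯ b = b ♯ a :=
  le_antisymm (nadd_comm_le a b) (nadd_comm_le b a)

@[simp] theorem nadd_zero (a : Ordinal.{u}) : a ♯ 0 = a := by
  refine le_antisymm (nadd_le_iff.2 ⟨fun a' ha => ?_, fun _ hc => absurd hc not_lt_zero⟩)
    le_self_nadd
  rwa [nadd_zero a']
termination_by a

@[simp] theorem zero_nadd (a : Ordinal.{u}) : 0 ♯ a = a := by
  rw [nadd_comm, nadd_zero]

theorem nadd_assoc (a b c : Ordinal.{u}) : a ♯ b ♯ c = a ♯ (b ♯ c) := by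
  apply le_antisymm
  · refine nadd_le_iff.2 ⟨fun x hx => ?_, fun c' hc => ?_⟩
    · rcases lt_nadd_iff.1 hx with ⟨a', ha, h⟩ | ⟨b', hb, h⟩
      · calc x ♯ c ≤ a' ♯ b ♯ c := nadd_le_nadd_right h c
          _ = a' ♯ (b ♯ c) := nadd_assoc a' b c
          _ < a ♯ (b ♯ c) := nadd_lt_nadd_right ha _
      · calc x ♯ c ≤ a ♯ b' ♯ c := nadd_le_nadd_right h c
          _ = a ♯ (b' ♯ c) := nadd_assoc a b' c
          _ < a ♯ (b ♯ c) := nadd_lt_nadd_left (nadd_lt_nadd_right hb c) a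
    · calc a ♯ b ♯ c' = a ♯ (b ♯ c') := nadd_assoc a b c'
        _ < a ♯ (b ♯ c) := nadd_lt_nadd_left (nadd_lt_nadd_left hc b) a
  · refine nadd_le_iff.2 ⟨fun a' ha => ?_, fun x hx => ?_⟩
    · calc a' ♯ (b ♯ c) = a' ♯ b ♯ c := (nadd_assoc a' b c).symm
        _ < a ♯ b ♯ c := nadd_lt_nadd_right (nadd_lt_nadd_right ha b) c
    · rcases lt_nadd_iff.1 hx with ⟨b', hb, h⟩ | ⟨c', hc, h⟩
      · calc a ♯ x ≤ a ♯ (b' ♯ c) := nadd_le_nadd_left h a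
          _ = a ♯ b' ♯ c := (nadd_assoc a b' c).symm
          _ < a ♯ b ♯ c := nadd_lt_nadd_right (nadd_lt_nadd_left hb a) c
      · calc a ♯ x ≤ a ♯ (b ♯ c') := nadd_le_nadd_left h a
          _ = a ♯ b ♯ c' := (nadd_assoc a b c').symm
          _ < a ♯ b ♯ c := nadd_lt_nadd_left hc _
termination_by (a, b, c)

instance : Std.Associative (α := Ordinal.{u}) (· ♯ ·) := ⟨nadd_assoc⟩

instance : Std.Commutative (α := Ordinal.{u}) (· ♯ ·) := ⟨nadd_comm⟩

theorem nadd_lt_nadd_iff_right (a : Ordinal.{u}) {b c : Ordinal.{u}} : b ♯ a < c ♯ a ↔ b < c :=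
  ⟨fun h => lt_of_not_ge fun h' => (nadd_le_nadd_right h' a).not_gt h,
    fun h => nadd_lt_nadd_right h a⟩

theorem add_le_nadd (a b : Ordinal.{u}) : a + b ≤ a ♯ b := by
  induction b using WellFoundedLT.induction with
  | _ b IH =>
    rcases eq_or_ne b 0 with rfl | hb
    · simp
    refine le_of_forall_lt fun x hx => ?_
    obtain ⟨d, hd, hx⟩ := (lt_add_iff hb).1 hx
    exact hx.trans_lt ((IH d hd).trans_lt (nadd_lt_nadd_left hd a))

theorem nadd_add_one (a b : Ordinal.{u}) : a ♯ (b + 1) = a ♯ b + 1 := by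
  refine le_antisymm (nadd_le_iff.2 ⟨fun a' ha => ?_, fun b' hb => ?_⟩)
    (Order.add_one_le_of_lt (nadd_lt_nadd_left (lt_add_one b) a))
  · rw [nadd_add_one a' b, ← Order.succ_eq_add_one, ← Order.succ_eq_add_one,
      Order.succ_lt_succ_iff]
    exact nadd_lt_nadd_right ha b
  · exact Order.lt_add_one_iff.2 (nadd_le_nadd_left (Order.lt_add_one_iff.1 hb) a)
termination_by a

theorem nadd_one (a : Ordinal.{u}) : a ♯ 1 = a + 1 := by
  simpa using nadd_add_one a 0

theorem nadd_natCast (a : Ordinal.{u}) (n : ℕ) : a ♯ n = a + n := by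
  induction n with
  | zero => simp
  | succ n ih => rw [Nat.cast_succ, nadd_add_one, ih, add_assoc]

theorem nmul_nonempty (a b : Ordinal.{u}) :
    {c : Ordinal.{u} | ∀ a' < a, ∀ b' < b, a' ⨳ b ♯ a ⨳ b' < c ♯ a' ⨳ b'}.Nonempty := by
  obtain ⟨c, hc⟩ : BddAbove (Set.range fun x : Set.Iio a × Set.Iio b => x.1.1 ⨳ b ♯ a ⨳ x.2.1) :=
    bddAbove_of_small
  exact ⟨Order.succ c, fun a' ha b' hb =>
    (Order.lt_succ_iff.2 (hc ⟨(⟨a', ha⟩, ⟨b', hb⟩), rfl⟩)).trans_le le_self_nadd⟩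

theorem nmul_nadd_lt {a' b' a b : Ordinal.{u}} (ha : a' < a) (hb : b' < b) :
    a' ⨳ b ♯ a ⨳ b' < a ⨳ b ♯ a' ⨳ b' := by
  have := csInf_mem (nmul_nonempty a b)
  rw [← nmul] at this
  exact this a' ha b' hb

theorem nmul_nadd_le {a' b' a b : Ordinal.{u}} (ha : a' ≤ a) (hb : b' ≤ b) :
    a' ⨳ b ♯ a ⨳ b' ≤ a ⨳ b ♯ a' ⨳ b' := by
  rcases ha.lt_or_eq with ha | rfl
  · rcases hb.lt_or_eq with hb | rfl
    · exact (nmul_nadd_lt ha hb).le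
    · rw [nadd_comm]
  · exact le_rfl

theorem nmul_le_iff {a b c : Ordinal.{u}} :
    a ⨳ b ≤ c ↔ ∀ a' < a, ∀ b' < b, a' ⨳ b ♯ a ⨳ b' < c ♯ a' ⨳ b' := by
  refine ⟨fun h a' ha b' hb => (nmul_nadd_lt ha hb).trans_le (nadd_le_nadd_right h _),
    fun h => ?_⟩
  rw [nmul]
  exact csInf_le' h

theorem lt_nmul_iff {a b c : Ordinal.{u}} :
    c < a ⨳ b ↔ ∃ a' < a, ∃ b' < b, c ♯ a' ⨳ b' ≤ a' ⨳ b ♯ a ⨳ b' := by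
  rw [← not_le, nmul_le_iff]
  simp only [not_forall, not_lt, exists_prop]

@[simp] theorem zero_nmul (a : Ordinal.{u}) : 0 ⨳ a = 0 :=
  nonpos_iff_eq_zero.1 (nmul_le_iff.2 fun _ ha => absurd ha not_lt_zero)

@[simp] theorem nmul_zero (a : Ordinal.{u}) : a ⨳ 0 = 0 :=
  nonpos_iff_eq_zero.1 (nmul_le_iff.2 fun _ _ _ hb => absurd hb not_lt_zero)

theorem nmul_comm (a b : Ordinal.{u}) : a ⨳ b = b ⨳ a := by
  rw [nmul, nmul]
  congr 1
  ext x
  constructor <;> intro H c hc d hd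
  · have := H d hd c hc
    rwa [nmul_comm d b, nmul_comm a c, nmul_comm d c, nadd_comm (b ⨳ d)] at this
  · have := H d hd c hc
    rwa [← nmul_comm a d, ← nmul_comm c b, ← nmul_comm c d, nadd_comm (a ⨳ d)] at this
termination_by (a, b)

theorem nmul_one (a : Ordinal.{u}) : a ⨳ 1 = a := by
  refine le_antisymm (nmul_le_iff.2 fun a' ha b' hb => ?_) (le_of_forall_lt fun c hc => ?_)
  · rw [Order.lt_one_iff.1 hb, nmul_zero, nmul_zero, nadd_zero, nadd_zero, nmul_one a']
    exact ha
  · simpa [nmul_one c] using nmul_nadd_lt hc zero_lt_one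
termination_by a

theorem one_nmul (a : Ordinal.{u}) : 1 ⨳ a = a := by
  rw [nmul_comm, nmul_one]

theorem nmul_le_nmul_left {a b : Ordinal.{u}} (h : a ≤ b) (c : Ordinal.{u}) :
    c ⨳ a ≤ c ⨳ b := by
  simpa using nmul_nadd_le (a := c) zero_le h

theorem nmul_le_nmul_right {a b : Ordinal.{u}} (h : a ≤ b) (c : Ordinal.{u}) :
    a ⨳ c ≤ b ⨳ c := by
  rw [nmul_comm a, nmul_comm b]
  exact nmul_le_nmul_left h c

theorem nmul_nadd (a b c : Ordinal.{u}) : a ⨳ (b ♯ c) = a ⨳ b ♯ a ⨳ c := by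
  refine le_antisymm (nmul_le_iff.2 fun a' ha d hd => ?_)
    (nadd_le_iff.2 ⟨fun x hx => ?_, fun x hx => ?_⟩)
  · rcases lt_nadd_iff.1 hd with ⟨b', hb, hd⟩ | ⟨c', hc, hd⟩
    · have H := nadd_lt_nadd_of_lt_of_le (nmul_nadd_lt ha hb) (nmul_nadd_le ha.le hd)
      rw [nmul_nadd a' b' c, nmul_nadd a b' c] at H
      rw [nmul_nadd a' b c, ← nadd_lt_nadd_iff_right (a ⨳ b' ♯ a' ⨳ b')]
      convert H using 1 <;> ac_rfl
    · have H := nadd_lt_nadd_of_lt_of_le (nmul_nadd_lt ha hc) (nmul_nadd_le ha.le hd)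
      rw [nmul_nadd a' b c', nmul_nadd a b c'] at H
      rw [nmul_nadd a' b c, ← nadd_lt_nadd_iff_right (a ⨳ c' ♯ a' ⨳ c')]
      convert H using 1 <;> ac_rfl
  · obtain ⟨a', ha, b', hb, hx⟩ := lt_nmul_iff.1 hx
    have H := nmul_nadd_lt ha (nadd_lt_nadd_right hb c)
    rw [nmul_nadd a' b c, nmul_nadd a b' c, nmul_nadd a' b' c] at H
    rw [← nadd_lt_nadd_iff_right (a' ⨳ b' ♯ a' ⨳ c)]
    calc x ♯ a ⨳ c ♯ (a' ⨳ b' ♯ a' ⨳ c) = (x ♯ a' ⨳ b') ♯ (a ⨳ c ♯ a' ⨳ c) := by ac_rfl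
      _ ≤ (a' ⨳ b ♯ a ⨳ b') ♯ (a ⨳ c ♯ a' ⨳ c) := nadd_le_nadd_right hx _
      _ < _ := lt_of_eq_of_lt (by ac_rfl) H
  · obtain ⟨a', ha, c', hc, hx⟩ := lt_nmul_iff.1 hx
    have H := nmul_nadd_lt ha (nadd_lt_nadd_left hc b)
    rw [nmul_nadd a' b c, nmul_nadd a b c', nmul_nadd a' b c'] at H
    rw [← nadd_lt_nadd_iff_right (a' ⨳ b ♯ a' ⨳ c')]
    calc a ⨳ b ♯ x ♯ (a' ⨳ b ♯ a' ⨳ c') = (x ♯ a' ⨳ c') ♯ (a ⨳ b ♯ a' ⨳ b) := by ac_rfl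
      _ ≤ (a' ⨳ c ♯ a ⨳ c') ♯ (a ⨳ b ♯ a' ⨳ b) := nadd_le_nadd_right hx _
      _ < _ := lt_of_eq_of_lt (by ac_rfl) H
termination_by (a, b, c)

theorem nadd_nmul (a b c : Ordinal.{u}) : (a ♯ b) ⨳ c = a ⨳ c ♯ b ⨳ c := by
  rw [nmul_comm, nmul_nadd, nmul_comm, nmul_comm c]

theorem nmul_add_one (a b : Ordinal.{u}) : a ⨳ (b + 1) = a ⨳ b ♯ a := by
  rw [← nadd_one, nmul_nadd, nmul_one]

theorem mul_le_nmul (a b : Ordinal.{u}) : a * b ≤ a ⨳ b := by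
  induction b using WellFoundedLT.induction with
  | _ b IH =>
    rcases zero_or_succ_or_isSuccLimit b with rfl | ⟨c, rfl⟩ | hb
    · simp
    · rw [Order.succ_eq_add_one, mul_add_one, nmul_add_one]
      exact (add_le_nadd _ a).trans (nadd_le_nadd_right (IH c (lt_add_one c)) a)
    · exact (mul_le_iff_of_isSuccLimit hb).2 fun b' hb' =>
        (IH b' hb').trans (nmul_le_nmul_left hb'.le a)

theorem le_mul_div_nadd_mod (a b : Ordinal.{u}) : a ≤ b * (a / b) ♯ a % b :=
  (div_add_mod a b).symm.trans_le (add_le_nadd _ _)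

theorem mul_nadd_le_mul_add {b : Ordinal.{u}} (hb : IsPrincipal (· ♯ ·) b) (K : Ordinal.{u})
    {x : Ordinal.{u}} (hx : x < b) : b * K ♯ x ≤ b * K + x := by
  have hb0 : b ≠ 0 := hx.ne_bot
  refine nadd_le_iff.2 ⟨fun w hw => ?_, fun y hy => ?_⟩
  · have hq : w / b < K := (lt_mul_iff_div_lt hb0).1 hw
    have hr : w % b ♯ x < b := hb (mod_lt w hb0) hx
    calc w ♯ x ≤ b * (w / b) ♯ w % b ♯ x := nadd_le_nadd_right (le_mul_div_nadd_mod w b) x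
      _ = b * (w / b) ♯ (w % b ♯ x) := nadd_assoc _ _ _
      _ ≤ b * (w / b) + (w % b ♯ x) := mul_nadd_le_mul_add hb _ hr
      _ < b * (w / b) + b := add_lt_add_right hr _
      _ = b * (w / b + 1) := (mul_add_one _ _).symm
      _ ≤ b * K := mul_le_mul_right (Order.add_one_le_of_lt hq) _
      _ ≤ b * K + x := le_self_add
  · exact (mul_nadd_le_mul_add hb K (hy.trans hx)).trans_lt (add_lt_add_right hy _)
termination_by (K, x)

theorem mul_nadd_self_le_mul_add_one {b : Ordinal.{u}} (hb : IsPrincipal (· ♯ ·) b)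
    (K : Ordinal.{u}) : b * K ♯ b ≤ b * (K + 1) := by
  rw [mul_add_one]
  refine nadd_le_iff.2 ⟨fun w hw => ?_, fun y hy => ?_⟩
  · have hb0 : b ≠ 0 := by rintro rfl; simp at hw
    have hq : w / b < K := (lt_mul_iff_div_lt hb0).1 hw
    have hr : w % b < b := mod_lt w hb0
    calc w ♯ b ≤ b * (w / b) ♯ w % b ♯ b := nadd_le_nadd_right (le_mul_div_nadd_mod w b) b
      _ = b * (w / b) ♯ b ♯ w % b := by ac_rfl
      _ ≤ b * (w / b + 1) ♯ w % b := nadd_le_nadd_right (mul_nadd_self_le_mul_add_one hb _) _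
      _ ≤ b * (w / b + 1) + w % b := mul_nadd_le_mul_add hb _ hr
      _ < b * (w / b + 1) + b := add_lt_add_right hr _
      _ ≤ b * K + b := add_le_add_left (mul_le_mul_right (Order.add_one_le_of_lt hq) _) _
  · exact (mul_nadd_le_mul_add hb K hy).trans_lt (add_lt_add_right hy _)
termination_by K

theorem mul_natCast_nadd_mul_natCast_le {b : Ordinal.{u}} (hb : IsPrincipal (· ♯ ·) b)
    (m n : ℕ) : b * m ♯ b * n ≤ b * (m + n : ℕ) := by
  induction n with
  | zero => simp
  | succ n ih =>
    calc b * m ♯ b * (n + 1 : ℕ) ≤ b * m ♯ (b * n ♯ b) := by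
          rw [Nat.cast_succ, mul_add_one]
          exact nadd_le_nadd_left (add_le_nadd _ _) _
      _ = b * m ♯ b * n ♯ b := (nadd_assoc _ _ _).symm
      _ ≤ b * (m + n : ℕ) ♯ b := nadd_le_nadd_right ih _
      _ ≤ b * ((m + n : ℕ) + 1) := mul_nadd_self_le_mul_add_one hb _
      _ = b * (m + (n + 1) : ℕ) := by push_cast; rw [add_assoc]

theorem nadd_lt_mul_natCast_add {b x y : Ordinal.{u}} (hb : IsPrincipal (· ♯ ·) b) {m n : ℕ}
    (hx : x < b * m) (hy : y < b * n) : x ♯ y < b * (m + n : ℕ) := by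
  have hb0 : b ≠ 0 := by rintro rfl; simp at hx
  have quotient {z : Ordinal.{u}} {k : ℕ} (hz : z < b * k) : ∃ i : ℕ, i < k ∧ z / b = i := by
    have hzk := (lt_mul_iff_div_lt hb0).1 hz
    obtain ⟨i, hi⟩ := lt_omega0.1 (hzk.trans (natCast_lt_omega0 k))
    exact ⟨i, by rwa [hi, Nat.cast_lt] at hzk, hi⟩
  obtain ⟨i, hi, hxi⟩ := quotient hx
  obtain ⟨j, hj, hyj⟩ := quotient hy
  have hr : x % b ♯ y % b < b := hb (mod_lt x hb0) (mod_lt y hb0)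
  calc x ♯ y ≤ (b * i ♯ x % b) ♯ (b * j ♯ y % b) := by
        rw [← hxi, ← hyj]
        exact nadd_le_nadd (le_mul_div_nadd_mod x b) (le_mul_div_nadd_mod y b)
    _ = (b * i ♯ b * j) ♯ (x % b ♯ y % b) := by ac_rfl
    _ ≤ b * (i + j : ℕ) ♯ (x % b ♯ y % b) :=
        nadd_le_nadd_right (mul_natCast_nadd_mul_natCast_le hb i j) _
    _ ≤ b * (i + j : ℕ) + (x % b ♯ y % b) := mul_nadd_le_mul_add hb _ hr
    _ < b * (i + j : ℕ) + b := add_lt_add_right hr _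
    _ = b * (i + j + 1 : ℕ) := by rw [Nat.cast_succ, mul_add_one]
    _ ≤ b * (m + n : ℕ) := mul_le_mul_right (by exact_mod_cast (by omega : i + j + 1 ≤ m + n)) _

theorem isPrincipal_nadd_omega0_opow (c : Ordinal.{u}) : IsPrincipal (· ♯ ·) (ω ^ c) := by
  induction c using WellFoundedLT.induction with
  | _ c IH =>
    intro x y hx hy
    rcases eq_or_ne c 0 with rfl | hc
    · rw [opow_zero, Order.lt_one_iff] at hx hy
      simp [hx, hy]
    obtain ⟨d, hd, m, hxm⟩ := (lt_omega0_opow hc).1 hx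
    obtain ⟨e, he, n, hyn⟩ := (lt_omega0_opow hc).1 hy
    have hde : max d e < c := max_lt hd he
    calc x ♯ y < ω ^ max d e * (m + n : ℕ) := by
          refine nadd_lt_mul_natCast_add (IH _ hde) (hxm.trans_le ?_) (hyn.trans_le ?_)
          exacts [mul_le_mul_left (opow_le_opow_right omega0_pos (le_max_left d e)) _,
            mul_le_mul_left (opow_le_opow_right omega0_pos (le_max_right d e)) _]
      _ < ω ^ c := opow_mul_lt_opow (natCast_lt_omega0 _) hde

theorem natCast_nmul_natCast (m n : ℕ) : (m : Ordinal.{u}) ⨳ n = (m * n : ℕ) := by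
  induction n with
  | zero => simp
  | succ n ih => rw [Nat.cast_succ, nmul_add_one, ih, nadd_natCast, Nat.mul_succ, Nat.cast_add]

theorem isPrincipal_nmul_omega0 : IsPrincipal (· ⨳ ·) ω := by
  intro a b ha hb
  obtain ⟨m, rfl⟩ := lt_omega0.1 ha
  obtain ⟨n, rfl⟩ := lt_omega0.1 hb
  exact (natCast_nmul_natCast m n).trans_lt (natCast_lt_omega0 _)

theorem nmul_natCast_le {b : Ordinal.{u}} (hb : IsPrincipal (· ♯ ·) b) (n : ℕ) :
    b ⨳ n ≤ b * n := by
  induction n with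
  | zero => simp
  | succ n ih =>
    rw [Nat.cast_succ, nmul_add_one]
    exact (nadd_le_nadd_right ih b).trans (mul_nadd_self_le_mul_add_one hb n)

theorem nmul_natCast_right_comm (a b : Ordinal.{u}) (n : ℕ) : a ⨳ n ⨳ b = a ⨳ b ⨳ n := by
  induction n with
  | zero => simp
  | succ n ih => rw [Nat.cast_succ, nmul_add_one, nmul_add_one, nadd_nmul, ih]

theorem nmul_le_mul_natCast {a b c x : Ordinal.{u}} {n : ℕ} (hc : IsPrincipal (· ♯ ·) c)
    (ha : a ≤ b * n) (hx : b ⨳ x ≤ c) : a ⨳ x ≤ c * n :=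
  calc a ⨳ x ≤ b * n ⨳ x := nmul_le_nmul_right ha x
    _ ≤ b ⨳ n ⨳ x := nmul_le_nmul_right (mul_le_nmul b n) x
    _ = b ⨳ x ⨳ n := nmul_natCast_right_comm b x n
    _ ≤ c ⨳ n := nmul_le_nmul_right hx n
    _ ≤ c * n := nmul_natCast_le hc n

theorem nmul_lt_omega0_opow_nadd_of_le {p q a x : Ordinal.{u}}
    (hpq : ∀ d < p, ω ^ d ⨳ ω ^ q ≤ ω ^ (d ♯ q)) (ha : a < ω ^ p) (hx : x ≤ ω ^ q) :
    a ⨳ x < ω ^ (p ♯ q) := by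
  rcases eq_or_ne p 0 with rfl | hp
  · rw [opow_zero, Order.lt_one_iff] at ha
    rw [ha, zero_nmul]
    exact opow_pos _ omega0_pos
  obtain ⟨d, hd, n, han⟩ := (lt_omega0_opow hp).1 ha
  have hdx : ω ^ d ⨳ x ≤ ω ^ (d ♯ q) := (nmul_le_nmul_left hx _).trans (hpq d hd)
  calc a ⨳ x ≤ ω ^ (d ♯ q) * n := nmul_le_mul_natCast (isPrincipal_nadd_omega0_opow _) han.le hdx
    _ < ω ^ (p ♯ q) := opow_mul_lt_opow (natCast_lt_omega0 n) (nadd_lt_nadd_right hd q)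

theorem omega0_opow_nmul_omega0_opow_le (p q : Ordinal.{u}) : ω ^ p ⨳ ω ^ q ≤ ω ^ (p ♯ q) := by
  refine nmul_le_iff.2 fun a ha b hb => ?_
  have ha' : a ⨳ ω ^ q < ω ^ (p ♯ q) :=
    nmul_lt_omega0_opow_nadd_of_le (fun d _ => omega0_opow_nmul_omega0_opow_le d q) ha le_rfl
  have hb' : ω ^ p ⨳ b < ω ^ (p ♯ q) := by
    rw [nmul_comm, nadd_comm]
    refine nmul_lt_omega0_opow_nadd_of_le (fun e _ => ?_) hb le_rfl
    rw [nmul_comm, nadd_comm]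
    exact omega0_opow_nmul_omega0_opow_le p e
  exact (isPrincipal_nadd_omega0_opow _ ha' hb').trans_le le_self_nadd
termination_by (p, q)

theorem nmul_lt_omega0_opow_nadd {p q a b : Ordinal.{u}} (ha : a < ω ^ p) (hb : b < ω ^ q) :
    a ⨳ b < ω ^ (p ♯ q) :=
  nmul_lt_omega0_opow_nadd_of_le (fun d _ => omega0_opow_nmul_omega0_opow_le d q) ha hb.le

theorem isPrincipal_nmul_omega0_opow_opow (o : Ordinal.{u}) : IsPrincipal (· ⨳ ·) (ω ^ ω ^ o) := by
  rcases eq_or_ne o 0 with rfl | ho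
  · simpa using isPrincipal_nmul_omega0
  intro a b ha hb
  have hlim := isSuccLimit_opow_left isSuccLimit_omega0 ho
  obtain ⟨p, hp, hap⟩ := (lt_opow_of_isSuccLimit omega0_ne_zero hlim).1 ha
  obtain ⟨q, hq, hbq⟩ := (lt_opow_of_isSuccLimit omega0_ne_zero hlim).1 hb
  exact (nmul_lt_omega0_opow_nadd hap hbq).trans
    ((opow_lt_opow_iff_right one_lt_omega0).2 (isPrincipal_nadd_omega0_opow o hp hq))

theorem isPrincipal_nmul_of_isPrincipal_mul {o : Ordinal.{u}} (ho : IsPrincipal (· * ·) o) :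
    IsPrincipal (· ⨳ ·) o := by
  rcases isPrincipal_mul_iff_le_two_or_omega0_opow_opow.1 ho with ho₂ | ⟨e, rfl⟩
  · intro a b ha hb
    have ha₁ : a ≤ 1 := Order.lt_add_one_iff.1 (by rw [one_add_one_eq_two]; exact ha.trans_le ho₂)
    calc a ⨳ b ≤ 1 ⨳ b := nmul_le_nmul_right ha₁ b
      _ = b := one_nmul b
      _ < o := hb
  · exact isPrincipal_nmul_omega0_opow_opow e

end Ordinal

/-- A multiplicatively closed ordinal is closed under Hessenberg natural
multiplication. -/
theorem multiplicatively_closed_nmul_closed {α : Ordinal}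
    (h : ∀ β < α, ∀ γ < α, β * γ < α) :
    ∀ β < α, ∀ γ < α, β ⨳ γ < α :=
  fun _ hβ _ hγ => Ordinal.isPrincipal_nmul_of_isPrincipal_mul (fun _ _ hb hc => h _ hb _ hc) hβ hγ
end
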